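/- Let V be a commutative unital quantale such that the forgetful structure makes each representable initial. For an affine set (X, S) over V (S a subalgebra of V^X closed under the pointwise operations of sups, tensors with constants, and infima of homs as needed), the assignments F(X, a) = (X, V-Cat((X,a), (V, hom))) and G(X, S) = (X, a_S) with a_S(x,y) = ⨅_{φ ∈ S} hom(φ(x), φ(y)) define mutually inverse bijections between V-category structures on X and such subalgebras of V^X; moreover these extend to an isomorphism of categories over Set. -/

import Mathlib

/-- The internal hom of a commutative quantale `V`: `hom u v = ⋁ {w | u ⊗ w ≤ v}`. -/
def qhom {V : Type*} [CompleteLattice V] [CommMonoid V] (u v : V) : V :=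
  sSup {w | u * w ≤ v}

/-- The initial `V`-category structure `a_S` induced by a family `S` of maps `X → V`. -/
def initStruct {V : Type*} [CompleteLattice V] [CommMonoid V] {X : Type*}
    (S : Set (X → V)) (x y : X) : V :=
  ⨅ φ ∈ S, qhom (φ x) (φ y)

/-- `ψ : X → V` is a `V`-functor `(X, a) → (V, hom)`. -/
def IsVFunctor {V : Type*} [CompleteLattice V] [CommMonoid V] {X : Type*}
    (a : X → X → V) (ψ : X → V) : Prop :=
  ∀ y z : X, a y z ≤ qhom (ψ y) (ψ z)

/-- `S` is an admissible subalgebra of `V^X`: it contains the representables of its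
induced initial structure and is closed under pointwise suprema and pointwise tensor
by constants. -/
def Admissible {V : Type*} [CompleteLattice V] [CommMonoid V] {X : Type*}
    (S : Set (X → V)) : Prop :=
  (∀ x : X, (fun y => initStruct S x y) ∈ S) ∧
  (∀ f : X → (X → V), (∀ y, f y ∈ S) → (fun x => ⨆ y, f y x) ∈ S) ∧
  (∀ φ ∈ S, ∀ v : V, (fun x => v * φ x) ∈ S)

/-!
A `V`-functor `ψ : (X, a) → (V, hom)` is recovered from the representables as
`ψ = ⋁_y ψ(y) ⊗ a(y, -)` (Yoneda). An admissible `S` contains the representables of `a_S` and is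
closed under such weighted suprema, so it contains every `V`-functor of `a_S`; the reverse
inclusion holds for any `S`. Conversely the representables `a(x, -)` are `V`-functors of `a`,
which forces `a_S = a` for `S = V-Cat((X, a), (V, hom))`. On morphisms, `f` is a `V`-functor
`(X, a_S) → (Y, a_T)` iff `φ ∘ f` is a `V`-functor of `a_S`, i.e. lies in `S`, for every `φ ∈ T`.
-/

section

variable {V : Type*} [CompleteLattice V] [CommMonoid V] {X : Type*}

theorem qhom_gc (hadj : ∀ u v w : V, u * w ≤ v ↔ w ≤ qhom u v) (u : V) :
    GaloisConnection (u * ·) (qhom u) :=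
  fun w v => hadj u v w

theorem initStruct_le_qhom {S : Set (X → V)} {φ : X → V} (hφ : φ ∈ S) (x y : X) :
    initStruct S x y ≤ qhom (φ x) (φ y) :=
  iInf₂_le φ hφ

theorem one_le_initStruct_self (hadj : ∀ u v w : V, u * w ≤ v ↔ w ≤ qhom u v)
    (S : Set (X → V)) (x : X) : 1 ≤ initStruct S x x :=
  le_iInf₂ fun φ _ => (qhom_gc hadj (φ x)).le_u (mul_one _).le

theorem isVFunctor_representable (hadj : ∀ u v w : V, u * w ≤ v ↔ w ≤ qhom u v)
    {a : X → X → V} (htrans : ∀ x y z, a x y * a y z ≤ a x z) (x : X) :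
    IsVFunctor a (a x) :=
  fun y z => (qhom_gc hadj (a x y)).le_u (htrans x y z)

theorem initStruct_setOf_isVFunctor (hadj : ∀ u v w : V, u * w ≤ v ↔ w ≤ qhom u v)
    {a : X → X → V} (hrefl : ∀ x, 1 ≤ a x x) (htrans : ∀ x y z, a x y * a y z ≤ a x z) :
    initStruct {ψ : X → V | IsVFunctor a ψ} = a := by
  funext x y
  apply le_antisymm
  · calc initStruct {ψ | IsVFunctor a ψ} x y
        ≤ qhom (a x x) (a x y) := initStruct_le_qhom (isVFunctor_representable hadj htrans x) x y
      _ = qhom (a x x) (a x y) * 1 := (mul_one _).symm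
      _ ≤ qhom (a x x) (a x y) * a x x := (qhom_gc hadj _).monotone_l (hrefl x)
      _ = a x x * qhom (a x x) (a x y) := mul_comm _ _
      _ ≤ a x y := (qhom_gc hadj _).l_u_le _
  · exact le_iInf₂ fun ψ hψ => hψ x y

theorem eq_iSup_mul_of_isVFunctor (hadj : ∀ u v w : V, u * w ≤ v ↔ w ≤ qhom u v)
    {a : X → X → V} (hrefl : ∀ x, 1 ≤ a x x) {ψ : X → V} (hψ : IsVFunctor a ψ) :
    ψ = fun z => ⨆ y, ψ y * a y z := by
  funext z
  apply le_antisymm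
  · calc ψ z = ψ z * 1 := (mul_one _).symm
      _ ≤ ψ z * a z z := (qhom_gc hadj _).monotone_l (hrefl z)
      _ ≤ ⨆ y, ψ y * a y z := le_iSup (fun y => ψ y * a y z) z
  · exact iSup_le fun y => (qhom_gc hadj _).l_le (hψ y z)

theorem setOf_isVFunctor_initStruct (hadj : ∀ u v w : V, u * w ≤ v ↔ w ≤ qhom u v)
    {S : Set (X → V)} (hS : Admissible S) :
    {ψ : X → V | IsVFunctor (initStruct S) ψ} = S := by
  obtain ⟨hrep, hsup, hmul⟩ := hS
  ext ψ
  refine ⟨fun hψ => ?_, fun hψ => initStruct_le_qhom hψ⟩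
  rw [eq_iSup_mul_of_isVFunctor hadj (one_le_initStruct_self hadj S) hψ]
  exact hsup _ fun y => hmul _ (hrep y) (ψ y)

theorem initStruct_le_initStruct_iff_isVFunctor_comp {Y : Type*} (S : Set (X → V))
    (T : Set (Y → V)) (f : X → Y) :
    (∀ x x' : X, initStruct S x x' ≤ initStruct T (f x) (f x')) ↔
      ∀ φ ∈ T, IsVFunctor (initStruct S) (φ ∘ f) :=
  ⟨fun h _ hφ x x' => (h x x').trans (initStruct_le_qhom hφ _ _),
    fun h x x' => le_iInf₂ fun φ hφ => h φ hφ x x'⟩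

end

/-- The assignments `F(X, a) = (X, V-Cat((X,a),(V,hom)))` and `G(X, S) = (X, a_S)` are
mutually inverse, and they identify `V`-functors with affine morphisms, giving a
concrete isomorphism `V-Cat ≅ AfSet(V)` over `Set`. -/
theorem vcat_iso_affineSets {V : Type*} [CompleteLattice V] [CommMonoid V]
    (hadj : ∀ u v w : V, u * w ≤ v ↔ w ≤ qhom u v) {X Y : Type u} :
    (∀ a : X → X → V, (∀ x, 1 ≤ a x x) → (∀ x y z, a x y * a y z ≤ a x z) →
      initStruct {ψ : X → V | IsVFunctor a ψ} = a) ∧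
    (∀ S : Set (X → V), Admissible S → {ψ : X → V | IsVFunctor (initStruct S) ψ} = S) ∧
    (∀ (S : Set (X → V)) (T : Set (Y → V)), Admissible S → Admissible T →
      ∀ f : X → Y,
        ((∀ x x' : X, initStruct S x x' ≤ initStruct T (f x) (f x')) ↔
          ∀ φ ∈ T, (φ ∘ f) ∈ S)) := by
  refine ⟨fun a hrefl htrans => initStruct_setOf_isVFunctor hadj hrefl htrans,
    fun S hS => setOf_isVFunctor_initStruct hadj hS, fun S T hS _ f => ?_⟩
  rw [initStruct_le_initStruct_iff_isVFunctor_comp]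
  exact forall₂_congr fun φ _ => Set.ext_iff.mp (setOf_isVFunctor_initStruct hadj hS) (φ ∘ f)
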